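/- For any composition (b_1,...,b_k) of n with each b_i ∈ {1,2}, the number of ordered set partitions of [n] with block sizes |B_i| = b_i (in order) that word-avoid 123 equals the k-th Catalan number C_k = C(2k,k)/(k+1). -/

import Mathlib

/-!
Read the word from the left while keeping a threshold `t` that every ascent has to start below
(initially no constraint). A first block `{v}` is allowed iff `v` is the largest remaining letter
or `v < t`, a first block `{x, v}` with `x < v` iff `v` is the largest remaining letter and `x < t`;
after reading a letter `v` the threshold becomes `min t v`, because a later ascent starting above
`v` would complete a `123`. Hence the number of admissible partitions with `k` blocks depends only on the
number `d` of letters at or above the threshold, and not on the block sizes: it is `ballot k d`,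
where `ballot (k + 1) d = ∑_{e ≥ d - 1} ballot k e`. These are the entries of Catalan's triangle,
and the first-return decomposition `ballot (k + 1) (d + 1) = ∑ᵢ catalan i * ballot (k - i) d`
gives `ballot k 0 = catalan k`.
-/

/-- The word of an ordered set partition: concatenate the blocks,
listing the elements of each block in increasing order. -/
def word (π : List (Finset ℕ)) : List ℕ :=
  (π.map (fun B => Finset.sort B (· ≤ ·))).flatten

/-- `π` is an ordered set partition of `[n] = {1,…,n}`: a list of nonempty,
pairwise disjoint finsets whose union is `{1,…,n}`. -/
def IsOSP (n : ℕ) (π : List (Finset ℕ)) : Prop :=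
  (∀ B ∈ π, B.Nonempty) ∧ π.Pairwise Disjoint ∧
    π.foldr (· ∪ ·) ∅ = Finset.Icc 1 n

noncomputable def minB (B : Finset ℕ) : ℕ := sInf (B : Set ℕ)
def maxB (B : Finset ℕ) : ℕ := B.sup id

/-- number of descents of a word -/
def desCount (w : List ℕ) : ℕ :=
  ((List.range (w.length - 1)).filter (fun i => w.getD (i + 1) 0 < w.getD i 0)).length

noncomputable def mindes (π : List (Finset ℕ)) : ℕ :=
  ((List.range (π.length - 1)).filter
    (fun i => minB (π.getD (i + 1) ∅) < minB (π.getD i ∅))).length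

def maxdes (π : List (Finset ℕ)) : ℕ :=
  ((List.range (π.length - 1)).filter
    (fun i => maxB (π.getD (i + 1) ∅) < maxB (π.getD i ∅))).length

noncomputable def pdes (π : List (Finset ℕ)) : ℕ :=
  ((List.range (π.length - 1)).filter
    (fun i => maxB (π.getD (i + 1) ∅) < minB (π.getD i ∅))).length

def Avoids12 (w : List ℕ) : Prop :=
  ¬ ∃ i j : ℕ, i < j ∧ j < w.length ∧ w.getD i 0 < w.getD j 0

def Avoids21 (w : List ℕ) : Prop :=
  ¬ ∃ i j : ℕ, i < j ∧ j < w.length ∧ w.getD j 0 < w.getD i 0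

def Avoids123 (w : List ℕ) : Prop :=
  ¬ ∃ i j k : ℕ, i < j ∧ j < k ∧ k < w.length ∧
    w.getD i 0 < w.getD j 0 ∧ w.getD j 0 < w.getD k 0

def Avoids132 (w : List ℕ) : Prop :=
  ¬ ∃ i j k : ℕ, i < j ∧ j < k ∧ k < w.length ∧
    w.getD i 0 < w.getD k 0 ∧ w.getD k 0 < w.getD j 0

def Avoids213 (w : List ℕ) : Prop :=
  ¬ ∃ i j k : ℕ, i < j ∧ j < k ∧ k < w.length ∧
    w.getD j 0 < w.getD i 0 ∧ w.getD i 0 < w.getD k 0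

def Avoids312 (w : List ℕ) : Prop :=
  ¬ ∃ i j k : ℕ, i < j ∧ j < k ∧ k < w.length ∧
    w.getD j 0 < w.getD k 0 ∧ w.getD k 0 < w.getD i 0

def Avoids321 (w : List ℕ) : Prop :=
  ¬ ∃ i j k : ℕ, i < j ∧ j < k ∧ k < w.length ∧
    w.getD k 0 < w.getD j 0 ∧ w.getD j 0 < w.getD i 0

/-- reverse-complement of an ordered set partition of `[n]` -/
def rcomp (n : ℕ) (π : List (Finset ℕ)) : List (Finset ℕ) :=
  (π.map (fun B => B.image (fun a => n + 1 - a))).reverse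

open Finset
open scoped List

def ballot : ℕ → ℕ → ℕ
  | 0, d => if d = 0 then 1 else 0
  | k + 1, d => ∑ e ∈ Icc (d - 1) k, ballot k e

theorem ballot_eq_zero_of_lt : ∀ {k d : ℕ}, k < d → ballot k d = 0
  | 0, _, h => if_neg (by omega)
  | _ + 1, _, h => sum_eq_zero fun _ he => by simp at he; omega

theorem ballot_succ_zero (k : ℕ) : ballot (k + 1) 0 = ballot (k + 1) 1 := rfl

theorem sum_Icc_ballot_of_le {k m : ℕ} (h : k ≤ m) (d : ℕ) :
    ∑ e ∈ Icc (d - 1) m, ballot k e = ballot (k + 1) d :=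
  (sum_subset (Icc_subset_Icc_right h) fun _ he he' =>
    ballot_eq_zero_of_lt (by simp at he he'; omega)).symm

theorem ballot_succ_succ_eq_sum_mul (k d : ℕ) :
    ballot (k + 1) (d + 1) = ∑ i ∈ range (k + 1), ballot i 0 * ballot (k - i) d := by
  induction k generalizing d with
  | zero => rcases d with _ | d <;> simp [ballot]
  | succ m ih =>
    have hsucc : ∀ d, ballot (m + 2) (d + 2) =
        ∑ i ∈ range (m + 2), ballot i 0 * ballot (m + 1 - i) (d + 1) := by
      intro d
      calc ballot (m + 2) (d + 2) = ∑ e ∈ Icc (d + 1) (m + 1), ballot (m + 1) e :=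
            (sum_Icc_ballot_of_le le_rfl _).symm
        _ = ∑ e ∈ Icc d m, ballot (m + 1) (e + 1) := by rw [← map_add_right_Icc, sum_map]; rfl
        _ = ∑ i ∈ range (m + 1), ballot i 0 * ballot (m + 1 - i) (d + 1) := by
            simp only [ih]
            rw [sum_comm]
            refine sum_congr rfl fun i hi => ?_
            rw [← mul_sum, Nat.sub_add_comm (by simpa using hi)]
            exact congrArg _ (sum_Icc_ballot_of_le (by omega) (d + 1))
        _ = _ := by
            rw [sum_range_succ _ (m + 1), Nat.sub_self, ballot_eq_zero_of_lt (Nat.succ_pos d),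
              mul_zero, add_zero]
    -- `ballot (m + 2) 1` is `ballot (m + 1) 0` plus the already settled case `d = 1`.
    rcases d with _ | d
    · have hsplit : ballot (m + 2) 1 = ballot (m + 1) 0 + ballot (m + 2) 2 := by
        rw [← sum_Icc_ballot_of_le le_rfl 1, ← sum_Icc_ballot_of_le le_rfl 2,
          Icc_eq_cons_Ioc (Nat.zero_le _), sum_cons, ← Icc_add_one_left_eq_Ioc]
        rfl
      rw [hsplit, hsucc, sum_range_succ, sum_range_succ _ (m + 1), Nat.sub_self,
        ballot_eq_zero_of_lt Nat.zero_lt_one, mul_zero, add_zero, add_comm]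
      refine congrArg₂ _ (sum_congr rfl fun i hi => ?_) (mul_one _).symm
      rw [Nat.sub_add_comm (by simpa using hi)]
      rfl
    · exact hsucc d

theorem ballot_zero_right_eq_catalan (k : ℕ) : ballot k 0 = catalan k := by
  induction k using Nat.strong_induction_on with
  | _ k ih =>
    rcases k with _ | k
    · simp [ballot]
    · rw [ballot_succ_zero, ballot_succ_succ_eq_sum_mul, catalan_succ,
        Fin.sum_univ_eq_sum_range (fun i => catalan i * catalan (k - i))]
      refine sum_congr rfl fun i hi => ?_
      rw [mem_range] at hi
      rw [ih i (by omega), ih (k - i) (by omega)]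

theorem avoids123_iff_sublist {w : List ℕ} :
    Avoids123 w ↔ ¬ ∃ a b c, [a, b, c] <+ w ∧ a < b ∧ b < c := by
  refine not_congr ⟨fun ⟨i, j, k, hij, hjk, hk, hab, hbc⟩ => ?_, fun ⟨a, b, c, hs, hab, hbc⟩ => ?_⟩
  · have hs : [w[i], w[j], w[k]] <+ w := by
      simpa using List.map_getElem_sublist (l := w) (is := [⟨i, by omega⟩, ⟨j, by omega⟩, ⟨k, hk⟩])
        (by simp; omega)
    rw [List.getD_eq_getElem _ _ (by omega), List.getD_eq_getElem _ _ (by omega)] at hab hbc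
    exact ⟨_, _, _, hs, hab, hbc⟩
  · obtain ⟨f, hf⟩ := List.sublist_iff_exists_fin_orderEmbedding_get_eq.1 hs
    have h01 : (f 0 : ℕ) < f 1 := f.strictMono (show (0 : Fin 3) < 1 by decide)
    have h12 : (f 1 : ℕ) < f 2 := f.strictMono (show (1 : Fin 3) < 2 by decide)
    have e0 : a = w[(f 0 : ℕ)] := hf 0
    have e1 : b = w[(f 1 : ℕ)] := hf 1
    have e2 : c = w[(f 2 : ℕ)] := hf 2
    refine ⟨f 0, f 1, f 2, h01, h12, (f 2).isLt, ?_, ?_⟩ <;>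
      simpa only [List.getD_eq_getElem _ _ (f _).isLt, ← e0, ← e1, ← e2]

/-- Since the threshold drops to each letter read, every ascent must start below `t` and below
all letters before it. -/
def AscentsBelow : ℕ → List ℕ → Prop
  | _, [] => True
  | t, v :: w => (∀ d ∈ w, v < d → v < t) ∧ AscentsBelow (min t v) w

instance instDecidableAscentsBelow : ∀ t w, Decidable (AscentsBelow t w)
  | _, [] => isTrue trivial
  | t, v :: w =>
    haveI := instDecidableAscentsBelow (min t v) w
    inferInstanceAs (Decidable ((∀ d ∈ w, v < d → v < t) ∧ AscentsBelow (min t v) w))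

theorem ascentsBelow_iff {t : ℕ} {w : List ℕ} (hw : w.Nodup) :
    AscentsBelow t w ↔ (¬ ∃ a b c, [a, b, c] <+ w ∧ a < b ∧ b < c) ∧
      ∀ a b, [a, b] <+ w → a < b → a < t := by
  induction w generalizing t with
  | nil => simp [AscentsBelow]
  | cons v w ih =>
    rw [List.nodup_cons] at hw
    simp only [AscentsBelow, ih hw.2, List.sublist_cons_iff, lt_min_iff, not_exists, not_and,
      not_lt, List.cons.injEq, existsAndEq, and_true, List.singleton_sublist]
    have hne : ∀ a b, [a, b] <+ w → a ≠ v := fun a b h hav => hw.1 (hav ▸ h.subset (by simp))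
    constructor
    · rintro ⟨h1, h2, h3⟩
      refine ⟨fun a b c hs hab => ?_, fun a b hs hab => ?_⟩
      · rcases hs with hs | ⟨rfl, hs⟩
        · exact h2 a b c hs hab
        · exact not_lt.1 fun hbc => lt_irrefl _ ((h3 b c hs hbc).2.trans hab)
      · rcases hs with hs | ⟨rfl, hs⟩
        · exact (h3 a b hs hab).1
        · exact h1 b hs hab
    · rintro ⟨h1, h2⟩
      refine ⟨fun d hd hvd => h2 v d (Or.inr ⟨rfl, hd⟩) hvd, fun a b c hs => h1 a b c (Or.inl hs),
        fun a b hs hab => ⟨h2 a b (Or.inl hs) hab, ?_⟩⟩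
      by_contra hva
      have := h1 v a b (Or.inr ⟨rfl, hs⟩) (lt_of_le_of_ne (not_lt.1 hva) (hne a b hs).symm)
      omega

section
variable {α : Type*}

theorem mem_foldr_union [DecidableEq α] {π : List (Finset α)} {a : α} :
    a ∈ π.foldr (· ∪ ·) ∅ ↔ ∃ B ∈ π, a ∈ B := by
  induction π <;> simp [*]

theorem disjoint_foldr_union [DecidableEq α] {π : List (Finset α)} {B : Finset α} :
    Disjoint B (π.foldr (· ∪ ·) ∅) ↔ ∀ C ∈ π, Disjoint B C := by
  induction π <;> simp [*]

theorem card_filter_const_and (s : Finset α) (P : Prop) [Decidable P] (Q : α → Prop)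
    [DecidablePred Q] : #{x ∈ s | P ∧ Q x} = if P then #{x ∈ s | Q x} else 0 := by
  split_ifs <;> simp [*]

variable [LinearOrder α]

theorem exists_lt_eq_pair_of_card_eq_two {B : Finset α} (hB : #B = 2) :
    ∃ x v, x < v ∧ B = {x, v} := by
  obtain ⟨x, v, hne, rfl⟩ := card_eq_two.1 hB
  rcases hne.lt_or_gt with h | h
  · exact ⟨x, v, h, rfl⟩
  · exact ⟨v, x, h, pair_comm x v⟩

theorem sort_pair {x v : α} (h : x < v) : ({x, v} : Finset α).sort (· ≤ ·) = [x, v] := by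
  rw [sort_insert _ (fun _ hb => (mem_singleton.1 hb).symm ▸ h.le) (by simpa using h.ne),
    sort_singleton]

theorem sum_card_filter_lt {M : Type*} [AddCommMonoid M] (s : Finset α) (f : ℕ → M) :
    ∑ x ∈ s, f #{y ∈ s | x < y} = ∑ j ∈ range #s, f j := by
  induction s using Finset.induction_on_min with
  | empty => simp
  | insert a s ha ih =>
    have has : a ∉ s := fun h => lt_irrefl a (ha a h)
    have htop : #{y ∈ insert a s | a < y} = #s := by
      rw [filter_insert, if_neg (lt_irrefl a), filter_true_of_mem ha]
    have hrest : ∀ x ∈ s, {y ∈ insert a s | x < y} = {y ∈ s | x < y} := fun x hx => by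
      rw [filter_insert, if_neg (ha x hx).asymm]
    rw [sum_insert has, card_insert_of_notMem has, sum_range_succ, ← ih, htop, add_comm]
    exact congrArg (· + f #s) (sum_congr rfl fun x hx => by rw [hrest x hx])

theorem sum_filter_lt_card_filter_lt {M : Type*} [AddCommMonoid M] (s : Finset α) (u : α)
    (f : ℕ → M) :
    ∑ x ∈ s with x < u, f #{y ∈ s | x < y} = ∑ e ∈ Ico #{y ∈ s | u ≤ y} #s, f e := by
  have hsplit : ∀ x ∈ s.filter (· < u),
      #{y ∈ s | x < y} = #{y ∈ s.filter (· < u) | x < y} + #{y ∈ s | u ≤ y} := by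
    intro x hx
    have hxu := (mem_filter.1 hx).2
    rw [← card_filter_add_card_filter_not (s := {y ∈ s | x < y}) (p := (· < u)), filter_filter,
      filter_filter, filter_filter]
    congr 2
    · exact filter_congr fun y _ => and_comm
    · exact filter_congr fun y _ => ⟨fun h => not_lt.1 h.2, fun h => ⟨hxu.trans_le h, not_lt.2 h⟩⟩
  have hcard : #s - #{y ∈ s | u ≤ y} = #{y ∈ s | y < u} := by
    rw [← card_filter_add_card_filter_not (s := s) (p := (· < u))]
    simp only [not_lt, Nat.add_sub_cancel]
  rw [sum_congr rfl fun x hx => congrArg f (hsplit x hx), sum_card_filter_lt _ (f <| · + _),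
    sum_Ico_eq_sum_range, hcard]
  simp only [add_comm]

theorem filter_erase_le_eq_filter_lt (s : Finset α) (x : α) :
    {y ∈ s.erase x | x ≤ y} = {y ∈ s | x < y} := by
  ext y
  simp only [mem_filter, mem_erase]
  exact ⟨fun ⟨⟨hne, hy⟩, hle⟩ => ⟨hy, lt_of_le_of_ne hle (Ne.symm hne)⟩,
    fun ⟨hy, hlt⟩ => ⟨⟨hlt.ne', hy⟩, hlt.le⟩⟩

theorem card_filter_erase_max'_le (s : Finset α) (hs : s.Nonempty) (t : α) :
    #{y ∈ s.erase (s.max' hs) | t ≤ y} = #{y ∈ s | t ≤ y} - 1 := by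
  rw [filter_erase, card_erase_eq_ite]
  split_ifs with hmax
  · rfl
  · rw [filter_eq_empty_iff.2 fun y hy hty =>
      hmax (mem_filter.2 ⟨s.max'_mem hs, hty.trans (s.le_max' y hy)⟩)]
    rfl

theorem filter_erase_max'_min_le (s : Finset α) (hs : s.Nonempty) (t : α) :
    {y ∈ s.erase (s.max' hs) | min t (s.max' hs) ≤ y} = {y ∈ s.erase (s.max' hs) | t ≤ y} :=
  filter_congr fun y hy => by
    rw [min_le_iff]
    exact or_iff_left (not_le.2 ((s.le_max' y (mem_of_mem_erase hy)).lt_of_ne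
      (ne_of_mem_erase hy)))

theorem card_filter_min_max'_le (s : Finset α) (hs : s.Nonempty) (t : α) :
    #{y ∈ s | min t (s.max' hs) ≤ y} = #{y ∈ s.erase (s.max' hs) | t ≤ y} + 1 := by
  rw [← filter_erase_max'_min_le,
    ← card_insert_of_notMem fun h => (mem_erase.1 (mem_filter.1 h).1).1 rfl]
  exact congrArg card ((congrArg (insert _) (filter_erase _ _ _)).trans
    (insert_erase (mem_filter.2 ⟨s.max'_mem hs, min_le_right _ _⟩))).symm

end

def orderedPartitions (S : Finset ℕ) : List ℕ → Finset (List (Finset ℕ))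
  | [] => if S = ∅ then {[]} else ∅
  | c :: b => (S.powersetCard c).biUnion fun B => (orderedPartitions (S \ B) b).image (B :: ·)

theorem mem_orderedPartitions {S : Finset ℕ} {b : List ℕ} {π : List (Finset ℕ)} :
    π ∈ orderedPartitions S b ↔
      π.map card = b ∧ π.Pairwise Disjoint ∧ π.foldr (· ∪ ·) ∅ = S := by
  induction b generalizing S π with
  | nil => cases π <;> by_cases hS : S = ∅ <;> simp [orderedPartitions, hS, eq_comm]
  | cons c b ih =>
    cases π with
    | nil => simp [orderedPartitions]
    | cons B π =>
      have hcompl : ∀ U, B ⊆ S ∧ U = S \ B ↔ Disjoint B U ∧ B ∪ U = S := fun U =>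
        ⟨fun ⟨hBS, hU⟩ => hU ▸ ⟨disjoint_sdiff, union_sdiff_of_subset hBS⟩,
          fun ⟨hd, hU⟩ => hU ▸ ⟨subset_union_left, (union_sdiff_cancel_left hd).symm⟩⟩
      simp only [orderedPartitions, mem_biUnion, mem_powersetCard, mem_image, List.cons.injEq, ih,
        existsAndEq, and_true, List.map_cons, List.pairwise_cons, ← disjoint_foldr_union,
        List.foldr_cons]
      have := hcompl (π.foldr (· ∪ ·) ∅)
      tauto

theorem mem_word {π : List (Finset ℕ)} {a : ℕ} : a ∈ word π ↔ ∃ B ∈ π, a ∈ B := by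
  simp [word]

theorem nodup_word {π : List (Finset ℕ)} (h : π.Pairwise Disjoint) : (word π).Nodup := by
  rw [word, List.nodup_flatten, List.pairwise_map]
  refine ⟨by simp, h.imp fun hBC => ?_⟩
  simpa [List.disjoint_iff_ne, disjoint_left] using hBC

theorem mem_word_iff_of_mem_orderedPartitions {S : Finset ℕ} {b : List ℕ}
    {π : List (Finset ℕ)} (h : π ∈ orderedPartitions S b) {a : ℕ} : a ∈ word π ↔ a ∈ S := by
  rw [mem_word, ← (mem_orderedPartitions.1 h).2.2, mem_foldr_union]

def countAscentsBelow (S : Finset ℕ) (b : List ℕ) (t : ℕ) : ℕ :=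
  #{π ∈ orderedPartitions S b | AscentsBelow t (word π)}

theorem countAscentsBelow_cons (S : Finset ℕ) (c : ℕ) (b : List ℕ) (t : ℕ) :
    countAscentsBelow S (c :: b) t = ∑ B ∈ S.powersetCard c,
      #{π ∈ orderedPartitions (S \ B) b | AscentsBelow t (B.sort (· ≤ ·) ++ word π)} := by
  rw [countAscentsBelow, orderedPartitions, filter_biUnion, card_biUnion]
  · refine sum_congr rfl fun B _ => ?_
    rw [filter_image, card_image_of_injective _ List.cons_injective]
    rfl
  · intro B _ B' _ hne
    simp only [Function.onFun, disjoint_left, mem_filter, mem_image]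
    rintro _ ⟨⟨π, _, rfl⟩, _⟩ ⟨⟨π', _, h⟩, _⟩
    exact hne (List.cons.inj h).1.symm

theorem card_filter_ascentsBelow_cons (S : Finset ℕ) (v : ℕ) (b : List ℕ) (t : ℕ) :
    #{π ∈ orderedPartitions (S.erase v) b | AscentsBelow t (v :: word π)} =
      if ∀ d ∈ S, v < d → v < t then countAscentsBelow (S.erase v) b (min t v) else 0 := by
  rw [countAscentsBelow, ← card_filter_const_and]
  refine congrArg card (filter_congr fun π hπ => ?_)
  simp only [AscentsBelow, mem_word_iff_of_mem_orderedPartitions hπ, mem_erase]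
  exact and_congr_left' ⟨fun h d hd hvd => h d ⟨hvd.ne', hd⟩ hvd, fun h d hd => h d hd.2⟩

theorem card_filter_ascentsBelow_cons_cons (S : Finset ℕ) {x v : ℕ} (hxv : x < v) (b : List ℕ)
    (t : ℕ) :
    #{π ∈ orderedPartitions (S \ {x, v}) b | AscentsBelow t (x :: v :: word π)} =
      if (∀ d ∈ S, d ≤ v) ∧ x < t then countAscentsBelow (S \ {x, v}) b (min t x) else 0 := by
  rw [countAscentsBelow, ← card_filter_const_and]
  refine congrArg card (filter_congr fun π hπ => ?_)
  simp only [AscentsBelow, List.mem_cons, forall_eq_or_imp,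
    mem_word_iff_of_mem_orderedPartitions hπ, min_eq_left ((min_le_right t x).trans hxv.le)]
  rw [← and_assoc]
  refine and_congr_left' ⟨fun ⟨⟨hxt, _⟩, hmax⟩ => ⟨fun d hd => not_lt.1 fun hvd => ?_, hxt hxv⟩,
    fun ⟨hmax, hxt⟩ => ⟨⟨fun _ => hxt, fun _ _ _ => hxt⟩,
      fun d hd hvd => absurd (hmax d (mem_sdiff.1 hd).1) (not_le.2 hvd)⟩⟩
  have := hmax d (mem_sdiff.2 ⟨hd, by simp; omega⟩) hvd
  omega

theorem countAscentsBelow_one_cons {S : Finset ℕ} (hS : S.Nonempty) (b : List ℕ) (t : ℕ) :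
    countAscentsBelow S (1 :: b) t =
      countAscentsBelow (S.erase (S.max' hS)) b (min t (S.max' hS)) +
        ∑ v ∈ S with v < min t (S.max' hS), countAscentsBelow (S.erase v) b v := by
  set M := S.max' hS
  have hvalid : {v ∈ S | ∀ d ∈ S, v < d → v < t} = insert M {v ∈ S | v < min t M} := by
    ext v
    simp only [mem_filter, mem_insert, lt_min_iff]
    constructor
    · rintro ⟨hv, h⟩
      rcases (S.le_max' v hv).lt_or_eq with hvM | hvM
      · exact Or.inr ⟨hv, h M (S.max'_mem hS) hvM, hvM⟩
      · exact Or.inl hvM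
    · rintro (rfl | ⟨hv, hvt, -⟩)
      · exact ⟨S.max'_mem hS, fun d hd hMd => absurd (S.le_max' d hd) (not_le.2 hMd)⟩
      · exact ⟨hv, fun _ _ _ => hvt⟩
  have hterm : ∀ v ∈ S, #{π ∈ orderedPartitions (S \ {v}) b |
      AscentsBelow t (({v} : Finset ℕ).sort (· ≤ ·) ++ word π)} =
        if ∀ d ∈ S, v < d → v < t then countAscentsBelow (S.erase v) b (min t v) else 0 :=
    fun v _ => by
      rw [sdiff_singleton_eq_erase, sort_singleton]
      exact card_filter_ascentsBelow_cons S v b t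
  rw [countAscentsBelow_cons, powersetCard_one, sum_map]
  refine (sum_congr rfl hterm).trans ?_
  rw [← sum_filter, hvalid, sum_insert (by simp [M])]
  refine congrArg _ (sum_congr rfl fun v hv => ?_)
  rw [min_eq_right ((mem_filter.1 hv).2.le.trans (min_le_left t M))]

theorem countAscentsBelow_two_cons {S : Finset ℕ} (hS : S.Nonempty) (b : List ℕ) (t : ℕ) :
    countAscentsBelow S (2 :: b) t =
      ∑ x ∈ S.erase (S.max' hS) with x < t,
        countAscentsBelow ((S.erase (S.max' hS)).erase x) b x := by
  set M := S.max' hS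
  have hterm : ∀ x v, x < v → #{π ∈ orderedPartitions (S \ {x, v}) b |
      AscentsBelow t (({x, v} : Finset ℕ).sort (· ≤ ·) ++ word π)} =
        if (∀ d ∈ S, d ≤ v) ∧ x < t then countAscentsBelow (S \ {x, v}) b (min t x) else 0 :=
    fun x v hxv => by
      rw [sort_pair hxv]
      exact card_filter_ascentsBelow_cons_cons S hxv b t
  have himage : ((S.erase M).filter (· < t)).image (fun x => {x, M}) ⊆ S.powersetCard 2 := by
    intro B hB
    obtain ⟨x, hx, rfl⟩ := mem_image.1 hB
    obtain ⟨⟨hxM, hxS⟩, -⟩ := mem_filter.1 hx |>.imp_left mem_erase.1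
    exact mem_powersetCard.2 ⟨insert_subset hxS (singleton_subset_iff.2 (S.max'_mem hS)),
      card_pair hxM⟩
  have hzero : ∀ B ∈ S.powersetCard 2, B ∉ ((S.erase M).filter (· < t)).image (fun x => {x, M}) →
      #{π ∈ orderedPartitions (S \ B) b | AscentsBelow t (B.sort (· ≤ ·) ++ word π)} = 0 := by
    intro B hB hBim
    obtain ⟨hBS, hB2⟩ := mem_powersetCard.1 hB
    obtain ⟨x, v, hxv, rfl⟩ := exists_lt_eq_pair_of_card_eq_two hB2
    rw [hterm x v hxv, if_neg]
    rintro ⟨hmax, hxt⟩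
    obtain rfl : v = M := le_antisymm (S.le_max' v (hBS (by simp))) (hmax M (S.max'_mem hS))
    exact hBim (mem_image_of_mem _ (mem_filter.2 ⟨mem_erase.2 ⟨hxv.ne, hBS (by simp)⟩, hxt⟩))
  rw [countAscentsBelow_cons, ← sum_subset himage hzero, sum_image]
  · refine sum_congr rfl fun x hx => ?_
    obtain ⟨⟨hxM, hxS⟩, hxt⟩ := mem_filter.1 hx |>.imp_left mem_erase.1
    rw [hterm x M ((S.le_max' x hxS).lt_of_ne hxM), if_pos ⟨fun d hd => S.le_max' d hd, hxt⟩,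
      min_eq_right hxt.le]
    congr 1
    ext d
    simp only [mem_sdiff, mem_insert, mem_singleton, mem_erase]
    tauto
  · intro x hx x' _ h
    exact (insert_inj (by simpa using (mem_erase.1 (mem_filter.1 hx).1).1)).1 h

theorem countAscentsBelow_eq_ballot {b : List ℕ} (hb : ∀ c ∈ b, c = 1 ∨ c = 2) {S : Finset ℕ}
    (hS : #S = b.sum) (t : ℕ) : countAscentsBelow S b t = ballot b.length #{s ∈ S | t ≤ s} := by
  induction b generalizing S t with
  | nil =>
    rw [card_eq_zero.1 hS]
    simp [countAscentsBelow, orderedPartitions, filter_singleton, AscentsBelow, word, ballot]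
  | cons c b ih =>
    have hb' : ∀ c ∈ b, c = 1 ∨ c = 2 := fun c hc => hb c (List.mem_cons_of_mem _ hc)
    have hc := hb c List.mem_cons_self
    rw [List.sum_cons] at hS
    have hne : S.Nonempty := card_pos.1 (by omega)
    set M := S.max' hne
    set T := S.erase M
    have hT : #T = b.sum + c - 1 := by rw [card_erase_of_mem (S.max'_mem hne)]; omega
    have herase : ∀ R : Finset ℕ, #R = b.sum + 1 → ∀ x ∈ R,
        countAscentsBelow (R.erase x) b x = ballot b.length #{s ∈ R | x < s} := fun R hR x hx => by
      rw [ih hb' (by rw [card_erase_of_mem hx, hR]; rfl), filter_erase_le_eq_filter_lt]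
    have hballot : ballot (b.length + 1) #{s ∈ S | t ≤ s} =
        ∑ e ∈ Icc #{s ∈ T | t ≤ s} b.sum, ballot b.length e := by
      rw [card_filter_erase_max'_le, sum_Icc_ballot_of_le (List.length_le_sum_of_one_le _
        fun c hc => by rcases hb' c hc with rfl | rfl <;> norm_num)]
    rw [List.length_cons, hballot]
    rcases hc with rfl | rfl
    · have hTle : #{s ∈ T | t ≤ s} ≤ b.sum := (card_filter_le _ _).trans (by omega)
      rw [countAscentsBelow_one_cons hne, ih hb' (S := T) (by omega), filter_erase_max'_min_le,
        sum_congr rfl fun v hv => herase S (by omega) v (mem_filter.1 hv).1,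
        sum_filter_lt_card_filter_lt, card_filter_min_max'_le, hS, ← Ico_add_one_right_eq_Icc,
        sum_eq_sum_Ico_succ_bot (a := #{s ∈ T | t ≤ s}) (by omega), add_comm 1 b.sum]
    · have hT : #T = b.sum + 1 := by omega
      rw [countAscentsBelow_two_cons hne,
        sum_congr rfl fun x hx => herase T hT x (mem_filter.1 hx).1,
        sum_filter_lt_card_filter_lt, hT, ← Ico_add_one_right_eq_Icc]

theorem natCard_avoids123_eq_countAscentsBelow {b : List ℕ} (hb : ∀ c ∈ b, 0 < c) (n : ℕ) :
    Nat.card {π : List (Finset ℕ) // IsOSP n π ∧ π.map card = b ∧ Avoids123 (word π)} =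
      countAscentsBelow (Icc 1 n) b (n + 1) := by
  rw [countAscentsBelow, ← Nat.card_eq_finsetCard]
  refine Nat.card_congr (Equiv.subtypeEquivRight fun π => ?_)
  rw [mem_filter, mem_orderedPartitions, IsOSP]
  constructor
  · rintro ⟨⟨-, hpw, hU⟩, hmap, hav⟩
    refine ⟨⟨hmap, hpw, hU⟩, (ascentsBelow_iff (nodup_word hpw)).2
      ⟨avoids123_iff_sublist.1 hav, fun a _ hs _ => ?_⟩⟩
    have ha : a ∈ π.foldr (· ∪ ·) ∅ :=
      mem_foldr_union.2 (mem_word.1 (hs.subset List.mem_cons_self))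
    rw [hU, mem_Icc] at ha
    omega
  · rintro ⟨⟨hmap, hpw, hU⟩, hasc⟩
    exact ⟨⟨fun B hB => card_pos.1 (hb _ (hmap ▸ List.mem_map_of_mem hB)), hpw, hU⟩, hmap,
      avoids123_iff_sublist.2 ((ascentsBelow_iff (nodup_word hpw)).1 hasc).1⟩

theorem stmt15 (b : List ℕ) (hb : ∀ x ∈ b, x = 1 ∨ x = 2) (n k : ℕ)
    (hn : n = b.sum) (hk : k = b.length) :
    (Nat.card {π : List (Finset ℕ) // IsOSP n π ∧
        π.map Finset.card = b ∧ Avoids123 (word π)} : ℚ) =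
      ((2 * k).choose k : ℚ) / (k + 1) := by
  subst hn hk
  have hpos : ∀ c ∈ b, 0 < c := fun c hc => by rcases hb c hc with rfl | rfl <;> norm_num
  have hhigh : {s ∈ Icc 1 b.sum | b.sum + 1 ≤ s} = ∅ :=
    filter_eq_empty_iff.2 fun s hs => by rw [mem_Icc] at hs; omega
  rw [natCard_avoids123_eq_countAscentsBelow hpos, countAscentsBelow_eq_ballot hb (by simp),
    hhigh, card_empty, ballot_zero_right_eq_catalan, eq_div_iff (by positivity)]
  exact_mod_cast (mul_comm _ _).trans (succ_mul_catalan_eq_centralBinom b.length)
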